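/- For α > 0 and constants C_T, μ_T ≥ 0, consider the kernel K_T(t,τ) = C_T·√α·exp(−πα(t−τ)² + μ_T|t−τ|)·exp(−(π/α)τ² + μ_T|τ|). Then sup_τ ∫_ℝ K_T(t,τ) dt and sup_t ∫_ℝ K_T(t,τ) dτ are both bounded by I(α) = C_T·√α·exp(μ_T²α/(4π))·∫_ℝ exp(−παξ² + μ_T|ξ|) dξ < ∞, and consequently for all f ∈ L²(ℝ), ∬_{ℝ×ℝ} |f(t)| K_T(t,τ) |f(τ)| dt dτ ≤ I(α)·‖f‖²_{L²(ℝ)} < ∞. -/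

import Mathlib

/-!
The weight `exp (-(π / α) τ² + μ_T |τ|)` is bounded by its maximum `exp (μ_T² α / (4π))`, so both
marginals of `K_T` are at most that maximum times the integral of the translated profile
`exp (-πα ξ² + μ_T |ξ|)`, which is translation invariant. The quadratic form bound is then the
Schur test with equal row and column bounds, which only needs `2ab ≤ a² + b²` and Tonelli.
-/

open MeasureTheory Real
open scoped ENNReal

theorem neg_mul_sq_add_mul_abs_le {a : ℝ} (ha : 0 < a) (b x : ℝ) :
    -(a * x ^ 2) + b * |x| ≤ b ^ 2 / (4 * a) := by
  have key : b ^ 2 / (4 * a) - (-(a * x ^ 2) + b * |x|) = (2 * a * |x| - b) ^ 2 / (4 * a) := by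
    rw [← sq_abs x]; field_simp; ring
  nlinarith [div_nonneg (sq_nonneg (2 * a * |x| - b)) (by positivity : (0 : ℝ) ≤ 4 * a)]

theorem integrable_exp_neg_mul_sq_add_mul_abs {a : ℝ} (ha : 0 < a) (b : ℝ) :
    Integrable fun x : ℝ => exp (-(a * x ^ 2) + b * |x|) := by
  refine ((integrable_exp_neg_mul_sq (half_pos ha)).const_mul (exp (b ^ 2 / (4 * (a / 2))))).mono'
    (by fun_prop) (.of_forall fun x => ?_)
  rw [norm_of_nonneg (exp_nonneg _), ← exp_add, exp_le_exp]
  linarith [neg_mul_sq_add_mul_abs_le (half_pos ha) b x]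

theorem ENNReal.two_mul_le_add_sq (a b : ℝ≥0∞) : 2 * a * b ≤ a ^ 2 + b ^ 2 := by
  rcases eq_top_or_lt_top a with rfl | ha
  · simp
  rcases eq_top_or_lt_top b with rfl | hb
  · simp
  lift a to NNReal using ha.ne
  lift b to NNReal using hb.ne
  exact_mod_cast _root_.two_mul_le_add_sq a b

theorem eLpNorm_two_sq_eq_lintegral {X F : Type*} [MeasurableSpace X] [NormedAddCommGroup F]
    (f : X → F) (μ : Measure X) : eLpNorm f 2 μ ^ 2 = ∫⁻ x, ‖f x‖ₑ ^ 2 ∂μ := by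
  simpa using eLpNorm_nnreal_pow_eq_lintegral (f := f) (μ := μ) (p := 2) two_ne_zero

section Schur

variable {X : Type*} [MeasurableSpace X] {μ : Measure X} [SFinite μ] {K : X × X → ℝ≥0∞}
  {g : X → ℝ≥0∞} {N : ℝ≥0∞}

theorem lintegral_sq_fst_mul_le (hK : Measurable K) (hg : AEMeasurable g μ)
    (hrow : ∀ x, ∫⁻ y, K (x, y) ∂μ ≤ N) :
    ∫⁻ p, g p.1 ^ 2 * K p ∂μ.prod μ ≤ N * ∫⁻ x, g x ^ 2 ∂μ := by
  rw [lintegral_prod (fun p => g p.1 ^ 2 * K p) ((hg.pow_const 2).comp_fst.mul hK.aemeasurable)]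
  calc ∫⁻ x, ∫⁻ y, g x ^ 2 * K (x, y) ∂μ ∂μ = ∫⁻ x, g x ^ 2 * ∫⁻ y, K (x, y) ∂μ ∂μ :=
        lintegral_congr fun x => lintegral_const_mul _ (hK.comp measurable_prodMk_left)
    _ ≤ ∫⁻ x, g x ^ 2 * N ∂μ := by gcongr with x; exact hrow x
    _ = N * ∫⁻ x, g x ^ 2 ∂μ := by rw [lintegral_mul_const'' _ (hg.pow_const 2), mul_comm]

theorem lintegral_sq_snd_mul_le (hK : Measurable K) (hg : AEMeasurable g μ)
    (hcol : ∀ y, ∫⁻ x, K (x, y) ∂μ ≤ N) :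
    ∫⁻ p, g p.2 ^ 2 * K p ∂μ.prod μ ≤ N * ∫⁻ x, g x ^ 2 ∂μ := by
  rw [lintegral_prod_symm (fun p => g p.2 ^ 2 * K p)
    ((hg.pow_const 2).comp_snd.mul hK.aemeasurable)]
  calc ∫⁻ y, ∫⁻ x, g y ^ 2 * K (x, y) ∂μ ∂μ = ∫⁻ y, g y ^ 2 * ∫⁻ x, K (x, y) ∂μ ∂μ :=
        lintegral_congr fun y => lintegral_const_mul _ (hK.comp measurable_prodMk_right)
    _ ≤ ∫⁻ y, g y ^ 2 * N ∂μ := by gcongr with y; exact hcol y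
    _ = N * ∫⁻ x, g x ^ 2 ∂μ := by rw [lintegral_mul_const'' _ (hg.pow_const 2), mul_comm]

theorem lintegral_mul_kernel_mul_le (hK : Measurable K) (hg : AEMeasurable g μ)
    (hcol : ∀ y, ∫⁻ x, K (x, y) ∂μ ≤ N) (hrow : ∀ x, ∫⁻ y, K (x, y) ∂μ ≤ N) :
    ∫⁻ p, g p.1 * K p * g p.2 ∂μ.prod μ ≤ N * ∫⁻ x, g x ^ 2 ∂μ := by
  refine (ENNReal.mul_le_mul_iff_right two_ne_zero ENNReal.ofNat_ne_top).mp ?_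
  calc 2 * ∫⁻ p, g p.1 * K p * g p.2 ∂μ.prod μ
      ≤ ∫⁻ p, g p.1 ^ 2 * K p + g p.2 ^ 2 * K p ∂μ.prod μ := by
        rw [← lintegral_const_mul' _ _ ENNReal.ofNat_ne_top]
        gcongr with p
        calc 2 * (g p.1 * K p * g p.2) = 2 * g p.1 * g p.2 * K p := by ring
          _ ≤ (g p.1 ^ 2 + g p.2 ^ 2) * K p := by gcongr; exact ENNReal.two_mul_le_add_sq _ _
          _ = g p.1 ^ 2 * K p + g p.2 ^ 2 * K p := add_mul _ _ _
    _ = ∫⁻ p, g p.1 ^ 2 * K p ∂μ.prod μ + ∫⁻ p, g p.2 ^ 2 * K p ∂μ.prod μ :=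
        lintegral_add_left' ((hg.pow_const 2).comp_fst.mul hK.aemeasurable) _
    _ ≤ 2 * (N * ∫⁻ x, g x ^ 2 ∂μ) := by
        rw [two_mul]
        exact add_le_add (lintegral_sq_fst_mul_le hK hg hrow) (lintegral_sq_snd_mul_le hK hg hcol)

end Schur

theorem ENNReal.ofReal_mul_mul_le_of_le {c e v B : ℝ} (hc : 0 ≤ c) (he : 0 ≤ e) (hv : v ≤ B) :
    ENNReal.ofReal (c * e * v) ≤ ENNReal.ofReal (c * B) * ENNReal.ofReal e := by
  rw [← ENNReal.ofReal_mul' he, mul_right_comm]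
  gcongr

theorem ofReal_mul_lintegral_ofReal {X : Type*} [MeasurableSpace X] {μ : Measure X} {E : X → ℝ}
    (a : ℝ) (hE : Integrable E μ) (hE0 : 0 ≤ E) :
    ENNReal.ofReal a * ∫⁻ x, ENNReal.ofReal (E x) ∂μ = ENNReal.ofReal (a * ∫ x, E x ∂μ) := by
  rw [← ofReal_integral_eq_lintegral_ofReal hE (.of_forall hE0),
    ← ENNReal.ofReal_mul' (integral_nonneg hE0)]

section Convolution

variable {G : Type*} [AddGroup G] [MeasurableSpace G] [MeasurableAdd G] {μ : Measure G}
  {E w : G → ℝ} {c B : ℝ}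

theorem lintegral_ofReal_mul_comp_sub_mul_le_right [μ.IsAddRightInvariant] (hc : 0 ≤ c)
    (hE : Integrable E μ) (hE0 : 0 ≤ E) (hw : ∀ y, w y ≤ B) (y : G) :
    ∫⁻ x, ENNReal.ofReal (c * E (x - y) * w y) ∂μ ≤ ENNReal.ofReal (c * B * ∫ x, E x ∂μ) := by
  calc ∫⁻ x, ENNReal.ofReal (c * E (x - y) * w y) ∂μ
      ≤ ∫⁻ x, ENNReal.ofReal (c * B) * ENNReal.ofReal (E (x - y)) ∂μ := by
        gcongr with x; exact ENNReal.ofReal_mul_mul_le_of_le hc (hE0 _) (hw y)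
    _ = ENNReal.ofReal (c * B * ∫ x, E x ∂μ) := by
      rw [lintegral_const_mul' _ _ ENNReal.ofReal_ne_top,
        lintegral_sub_right_eq_self (fun x => ENNReal.ofReal (E x)) y,
        ofReal_mul_lintegral_ofReal _ hE hE0]

theorem lintegral_ofReal_mul_comp_sub_mul_le_left [MeasurableNeg G] [μ.IsAddLeftInvariant]
    [μ.IsNegInvariant] (hc : 0 ≤ c) (hE : Integrable E μ) (hE0 : 0 ≤ E) (hw : ∀ y, w y ≤ B)
    (x : G) :
    ∫⁻ y, ENNReal.ofReal (c * E (x - y) * w y) ∂μ ≤ ENNReal.ofReal (c * B * ∫ x, E x ∂μ) := by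
  calc ∫⁻ y, ENNReal.ofReal (c * E (x - y) * w y) ∂μ
      ≤ ∫⁻ y, ENNReal.ofReal (c * B) * ENNReal.ofReal (E (x - y)) ∂μ := by
        gcongr with y; exact ENNReal.ofReal_mul_mul_le_of_le hc (hE0 _) (hw y)
    _ = ENNReal.ofReal (c * B * ∫ x, E x ∂μ) := by
      rw [lintegral_const_mul' _ _ ENNReal.ofReal_ne_top,
        lintegral_sub_left_eq_self (fun y => ENNReal.ofReal (E y)) x,
        ofReal_mul_lintegral_ofReal _ hE hE0]

end Convolution

theorem gaussian_kernel_schur_bounds_general (α CT μT : ℝ) (hα : 0 < α) (hCT : 0 ≤ CT) :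
    (∀ τ : ℝ, ∫⁻ t, ENNReal.ofReal
          (CT * Real.sqrt α * Real.exp (-(π * α * (t - τ) ^ 2) + μT * |t - τ|) *
            Real.exp (-(π / α * τ ^ 2) + μT * |τ|))
        ≤ ENNReal.ofReal (CT * Real.sqrt α * Real.exp (μT ^ 2 * α / (4 * π)) *
            ∫ ξ : ℝ, Real.exp (-(π * α * ξ ^ 2) + μT * |ξ|))) ∧
    (∀ t : ℝ, ∫⁻ τ, ENNReal.ofReal
          (CT * Real.sqrt α * Real.exp (-(π * α * (t - τ) ^ 2) + μT * |t - τ|) *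
            Real.exp (-(π / α * τ ^ 2) + μT * |τ|))
        ≤ ENNReal.ofReal (CT * Real.sqrt α * Real.exp (μT ^ 2 * α / (4 * π)) *
            ∫ ξ : ℝ, Real.exp (-(π * α * ξ ^ 2) + μT * |ξ|))) ∧
    Integrable (fun ξ : ℝ => Real.exp (-(π * α * ξ ^ 2) + μT * |ξ|)) ∧
    ∀ f : ℝ → ℂ, MemLp f 2 volume →
      ∫⁻ p : ℝ × ℝ, ENNReal.ofReal
          (‖f p.1‖ * (CT * Real.sqrt α *
              Real.exp (-(π * α * (p.1 - p.2) ^ 2) + μT * |p.1 - p.2|) *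
              Real.exp (-(π / α * p.2 ^ 2) + μT * |p.2|)) * ‖f p.2‖)
        ≤ ENNReal.ofReal (CT * Real.sqrt α * Real.exp (μT ^ 2 * α / (4 * π)) *
            ∫ ξ : ℝ, Real.exp (-(π * α * ξ ^ 2) + μT * |ξ|)) *
          (eLpNorm f 2 volume) ^ 2 := by
  set E : ℝ → ℝ := fun ξ => exp (-(π * α * ξ ^ 2) + μT * |ξ|)
  set G : ℝ → ℝ := fun τ => exp (-(π / α * τ ^ 2) + μT * |τ|)
  have hc : 0 ≤ CT * √α := by positivity
  have hE : Integrable E := integrable_exp_neg_mul_sq_add_mul_abs (by positivity) μT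
  have hE0 : 0 ≤ E := fun ξ => exp_nonneg _
  have hG : ∀ τ, G τ ≤ exp (μT ^ 2 * α / (4 * π)) := fun τ => by
    have h := neg_mul_sq_add_mul_abs_le (div_pos pi_pos hα) μT τ
    rw [show μT ^ 2 / (4 * (π / α)) = μT ^ 2 * α / (4 * π) by field_simp] at h
    exact exp_le_exp.mpr h
  have hcol := lintegral_ofReal_mul_comp_sub_mul_le_right (μ := volume) hc hE hE0 hG
  have hrow := lintegral_ofReal_mul_comp_sub_mul_le_left (μ := volume) hc hE hE0 hG
  refine ⟨hcol, hrow, hE, fun f hf => ?_⟩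
  calc ∫⁻ p : ℝ × ℝ, ENNReal.ofReal (‖f p.1‖ * (CT * √α * E (p.1 - p.2) * G p.2) * ‖f p.2‖)
      = ∫⁻ p : ℝ × ℝ, ‖f p.1‖ₑ * ENNReal.ofReal (CT * √α * E (p.1 - p.2) * G p.2) * ‖f p.2‖ₑ
          ∂volume.prod volume := by
        refine lintegral_congr fun p => ?_
        rw [ENNReal.ofReal_mul (by positivity), ENNReal.ofReal_mul (norm_nonneg _), ofReal_norm,
          ofReal_norm]
    _ ≤ _ := lintegral_mul_kernel_mul_le (by fun_prop) hf.1.enorm hcol hrow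
    _ = _ := by rw [eLpNorm_two_sq_eq_lintegral]

/-- Schur-type bounds for the kernel
`K_T(t,τ) = C_T √α exp(−πα(t−τ)² + μ_T|t−τ|) exp(−(π/α)τ² + μ_T|τ|)`:
both marginal integrals are bounded by
`I(α) = C_T √α exp(μ_T²α/(4π)) ∫ exp(−παξ² + μ_T|ξ|) dξ < ∞`, and consequently
`∬ |f(t)| K_T(t,τ) |f(τ)| dt dτ ≤ I(α) ‖f‖²_{L²}` for every `f ∈ L²(ℝ)`. -/
theorem gaussian_kernel_schur_bounds (α CT μT : ℝ) (hα : 0 < α) (hCT : 0 ≤ CT)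
    (hμT : 0 ≤ μT) :
    (∀ τ : ℝ, ∫⁻ t, ENNReal.ofReal
          (CT * Real.sqrt α * Real.exp (-(π * α * (t - τ) ^ 2) + μT * |t - τ|) *
            Real.exp (-(π / α * τ ^ 2) + μT * |τ|))
        ≤ ENNReal.ofReal (CT * Real.sqrt α * Real.exp (μT ^ 2 * α / (4 * π)) *
            ∫ ξ : ℝ, Real.exp (-(π * α * ξ ^ 2) + μT * |ξ|))) ∧
    (∀ t : ℝ, ∫⁻ τ, ENNReal.ofReal
          (CT * Real.sqrt α * Real.exp (-(π * α * (t - τ) ^ 2) + μT * |t - τ|) *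
            Real.exp (-(π / α * τ ^ 2) + μT * |τ|))
        ≤ ENNReal.ofReal (CT * Real.sqrt α * Real.exp (μT ^ 2 * α / (4 * π)) *
            ∫ ξ : ℝ, Real.exp (-(π * α * ξ ^ 2) + μT * |ξ|))) ∧
    Integrable (fun ξ : ℝ => Real.exp (-(π * α * ξ ^ 2) + μT * |ξ|)) ∧
    ∀ f : ℝ → ℂ, MemLp f 2 volume →
      ∫⁻ p : ℝ × ℝ, ENNReal.ofReal
          (‖f p.1‖ * (CT * Real.sqrt α *
              Real.exp (-(π * α * (p.1 - p.2) ^ 2) + μT * |p.1 - p.2|) *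
              Real.exp (-(π / α * p.2 ^ 2) + μT * |p.2|)) * ‖f p.2‖)
        ≤ ENNReal.ofReal (CT * Real.sqrt α * Real.exp (μT ^ 2 * α / (4 * π)) *
            ∫ ξ : ℝ, Real.exp (-(π * α * ξ ^ 2) + μT * |ξ|)) *
          (eLpNorm f 2 volume) ^ 2 :=
  gaussian_kernel_schur_bounds_general α CT μT hα hCT
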